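/- arXiv:2112.13506 — 3 statements merged into one kernel-verified Lean document; each statement's English description precedes it below -/
import Mathlib

section
/- The bias-corrected matching estimator τ̂ = (1/n)Σ_i [Ŷ_i^{bc}(1) − Ŷ_i^{bc}(0)], where for treated units Ŷ_i^{bc}(0) = (1/M)Σ_{j∈J⁰_M(i)}(Y_j + μ̂₀(X_i) − μ̂₀(X_j)) (and symmetrically for controls), equals τ̂^{reg} + (1/n)[Σ_{i: D_i=1}(1 + K¹_M(i)/M)R̂_i − Σ_{i: D_i=0}(1 + K⁰_M(i)/M)R̂_i], where τ̂^{reg} = (1/n)Σ_i[μ̂₁(X_i) − μ̂₀(X_i)] and R̂_i = Y_i − μ̂_{D_i}(X_i). -/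
open Finset

/-
Writing `R i = Y i - μ̂_{D i}(X i)` for the residuals, each bias-corrected imputation is the
model prediction at `X i` plus the average residual of the `M` matches, e.g. for a treated unit
`Ŷ_i(0) = μ̂₀(X_i) + (1/M) Σ_{j ∈ J⁰(i)} R j`. Summing over units, the matched residuals are
regrouped by double counting: the residual of unit `j` appears once for each unit that uses it
as a match, i.e. `K(j)` times.
-/

theorem Finset.sum_sum_eq_sum_card_filter_mul {ι κ R : Type*} [DecidableEq κ] [CommSemiring R]
    {A : Finset ι} {B : Finset κ} {J : ι → Finset κ} (hJ : ∀ i ∈ A, J i ⊆ B) (g : κ → R) :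
    ∑ i ∈ A, ∑ j ∈ J i, g j = ∑ j ∈ B, (#{i ∈ A | j ∈ J i} : R) * g j := by
  rw [sum_comm' (t' := B) (s' := fun j => {i ∈ A | j ∈ J i})]
  · simp only [sum_const, nsmul_eq_mul]
  · intro i j
    simp only [mem_filter]
    exact ⟨fun ⟨hi, hj⟩ => ⟨⟨hi, hj⟩, hJ i hi hj⟩, fun ⟨h, _⟩ => h⟩

theorem Finset.one_div_card_mul_sum_add_sub {ι K : Type*} [Field K] [CharZero K]
    {s : Finset ι} (hs : s.Nonempty) (c : K) (y m : ι → K) :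
    (1 / #s : K) * ∑ j ∈ s, (y j + c - m j) = c + (1 / #s : K) * ∑ j ∈ s, (y j - m j) := by
  have hcard : (#s : K) ≠ 0 := Nat.cast_ne_zero.mpr hs.card_pos.ne'
  simp only [add_sub_right_comm _ c, sum_add_distrib, sum_const, nsmul_eq_mul]
  field_simp
  ring

theorem imputed_difference_eq_predicted_add_residual {ι K : Type*} [Field K] [CharZero K]
    {M : ℕ} (hM : 0 < M) (d : Bool) (y μ₀ μ₁ : K) (Y m₀ m₁ : ι → K) (J₀ J₁ : Finset ι)
    (hJ₀ : d = true → #J₀ = M) (hJ₁ : d = false → #J₁ = M) :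
    (if d then y else (1 / M : K) * ∑ j ∈ J₁, (Y j + μ₁ - m₁ j))
        - (if d then (1 / M : K) * ∑ j ∈ J₀, (Y j + μ₀ - m₀ j) else y)
      = (μ₁ - μ₀) + if d then (y - μ₁) - (1 / M : K) * ∑ j ∈ J₀, (Y j - m₀ j)
          else (1 / M : K) * ∑ j ∈ J₁, (Y j - m₁ j) - (y - μ₀) := by
  cases d with
  | false =>
    rw [← hJ₁ rfl, one_div_card_mul_sum_add_sub (card_pos.mp (hJ₁ rfl ▸ hM))]
    simp only [Bool.false_eq_true, if_false]
    ring
  | true =>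
    rw [← hJ₀ rfl, one_div_card_mul_sum_add_sub (card_pos.mp (hJ₀ rfl ▸ hM))]
    simp only [if_true]
    ring

theorem biasCorrected_matching_estimator_eq_general {n : ℕ} (M : ℕ) (hM : 0 < M)
    {ξ : Type*} (X : Fin n → ξ) (D : Fin n → Bool) (Y : Fin n → ℝ)
    (muhat0 muhat1 : ξ → ℝ)
    (J0 J1 : Fin n → Finset (Fin n))
    (hJ0sub : ∀ i, D i = true → J0 i ⊆ Finset.univ.filter fun j => D j = false)
    (hJ0card : ∀ i, D i = true → (J0 i).card = M)
    (hJ1sub : ∀ i, D i = false → J1 i ⊆ Finset.univ.filter fun j => D j = true)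
    (hJ1card : ∀ i, D i = false → (J1 i).card = M) :
    (1 / n : ℝ) * ∑ i,
        ((if D i then Y i
          else (1 / M : ℝ) * ∑ j ∈ J1 i, (Y j + muhat1 (X i) - muhat1 (X j)))
        - (if D i then (1 / M : ℝ) * ∑ j ∈ J0 i, (Y j + muhat0 (X i) - muhat0 (X j))
          else Y i))
    = (1 / n : ℝ) * ∑ i, (muhat1 (X i) - muhat0 (X i))
      + (1 / n : ℝ) *
        ((∑ i ∈ Finset.univ.filter fun i => D i = true,
            (1 + ((Finset.univ.filter fun j => D j = false ∧ i ∈ J1 j).card : ℝ) / M)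
              * (Y i - muhat1 (X i)))
        - ∑ i ∈ Finset.univ.filter fun i => D i = false,
            (1 + ((Finset.univ.filter fun j => D j = true ∧ i ∈ J0 j).card : ℝ) / M)
              * (Y i - muhat0 (X i))) := by
  have hK0 := sum_sum_eq_sum_card_filter_mul (A := {i | D i = true})
    (fun i hi => hJ0sub i (mem_filter.mp hi).2) fun j => Y j - muhat0 (X j)
  have hK1 := sum_sum_eq_sum_card_filter_mul (A := {i | D i = false})
    (fun i hi => hJ1sub i (mem_filter.mp hi).2) fun j => Y j - muhat1 (X j)
  simp only [filter_filter] at hK0 hK1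
  rw [sum_congr rfl fun i _ => imputed_difference_eq_predicted_add_residual hM (D i) (Y i)
    (muhat0 (X i)) (muhat1 (X i)) Y (fun j => muhat0 (X j))
    (fun j => muhat1 (X j)) (J0 i) (J1 i) (hJ0card i) (hJ1card i),
    sum_add_distrib, sum_ite]
  simp only [Bool.not_eq_true]
  rw [sum_sub_distrib (f := fun i => Y i - muhat1 (X i)),
    sum_sub_distrib (g := fun i => Y i - muhat0 (X i)), ← mul_sum, ← mul_sum, hK0, hK1]
  simp only [add_mul, one_mul, sum_add_distrib, div_mul_eq_mul_div, ← sum_div]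
  ring

/-- The Abadie–Imbens bias-corrected matching estimator, defined via bias-corrected imputed
potential outcomes, equals the regression estimator plus the weighted sum of residuals with
weights `1 + K_M(i)/M`. -/
theorem biasCorrected_matching_estimator_eq {n : ℕ} (hn : 0 < n) (M : ℕ) (hM : 0 < M)
    {ξ : Type*} (X : Fin n → ξ) (D : Fin n → Bool) (Y : Fin n → ℝ)
    (muhat0 muhat1 : ξ → ℝ)
    (J0 J1 : Fin n → Finset (Fin n))
    (hJ0sub : ∀ i, D i = true → J0 i ⊆ Finset.univ.filter fun j => D j = false)
    (hJ0card : ∀ i, D i = true → (J0 i).card = M)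
    (hJ1sub : ∀ i, D i = false → J1 i ⊆ Finset.univ.filter fun j => D j = true)
    (hJ1card : ∀ i, D i = false → (J1 i).card = M) :
    (1 / n : ℝ) * ∑ i,
        ((if D i then Y i
          else (1 / M : ℝ) * ∑ j ∈ J1 i, (Y j + muhat1 (X i) - muhat1 (X j)))
        - (if D i then (1 / M : ℝ) * ∑ j ∈ J0 i, (Y j + muhat0 (X i) - muhat0 (X j))
          else Y i))
    = (1 / n : ℝ) * ∑ i, (muhat1 (X i) - muhat0 (X i))
      + (1 / n : ℝ) *
        ((∑ i ∈ Finset.univ.filter fun i => D i = true,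
            (1 + ((Finset.univ.filter fun j => D j = false ∧ i ∈ J1 j).card : ℝ) / M)
              * (Y i - muhat1 (X i)))
        - ∑ i ∈ Finset.univ.filter fun i => D i = false,
            (1 + ((Finset.univ.filter fun j => D j = true ∧ i ∈ J0 j).card : ℝ) / M)
              * (Y i - muhat0 (X i))) :=
  biasCorrected_matching_estimator_eq_general M hM X D Y muhat0 muhat1 J0 J1 hJ0sub hJ0card hJ1sub
    hJ1card
end

section
/- Let g: [0,∞) → R be twice continuously differentiable with sup_x |x·g''(x)| < ∞. Then for all x > 0 and t ≥ 0, |g(t) − g(x) − g'(x)(t−x)| ≤ 4·((t−x)²/x)·sup_{s>0} |s·g''(s)|. -/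
/-!
Regard the Taylor remainder as a function of its base point,
`φ s = g t - g s - g' s * (t - s)`. Then `φ t = 0`, `φ x` is the remainder to be bounded, and
`φ' s = -(t - s) * g'' s`. For `s` between `x` and `t` the weight `|t - s| / s = |t / s - 1|` is at
most `|t - x| / x`, so `|φ'| ≤ B |t - x| / x` there, and the mean value inequality gives
`|φ x| ≤ B (t - x)² / x`, so the constant `4` could even be `1`.
-/

open Set

theorem HasDerivWithinAt.taylor_remainder_base {g g' : ℝ → ℝ} {b t s : ℝ} {S : Set ℝ}
    (hg : HasDerivWithinAt g (g' s) S s) (hg' : HasDerivWithinAt g' b S s) :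
    HasDerivWithinAt (fun u => g t - g u - g' u * (t - u)) (-((t - s) * b)) S s := by
  have h := (hg.const_sub (g t)).fun_sub (hg'.fun_mul ((hasDerivWithinAt_id s S).const_sub t))
  exact h.congr_deriv (by simp only [id]; ring)

theorem abs_sub_div_le_of_mem_uIcc {x t s : ℝ} (hx : 0 < x) (ht : 0 ≤ t) (hs : s ∈ uIcc x t)
    (hs₀ : 0 < s) : |t - s| / s ≤ |t - x| / x := by
  rw [div_le_div_iff₀ hs₀ hx]
  rcases le_total x t with hxt | htx
  · rw [uIcc_of_le hxt] at hs
    rw [abs_of_nonneg (by linarith [hs.2]), abs_of_nonneg (by linarith)]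
    nlinarith [hs.1]
  · rw [uIcc_of_ge htx] at hs
    rw [abs_of_nonpos (by linarith [hs.1]), abs_of_nonpos (by linarith)]
    nlinarith [hs.2]

theorem abs_sub_mul_le_of_mem_uIcc {g'' : ℝ → ℝ} {B x t s : ℝ}
    (hB : ∀ s : ℝ, 0 < s → |s * g'' s| ≤ B) (hx : 0 < x) (ht : 0 ≤ t) (hs : s ∈ uIcc x t) :
    |(t - s) * g'' s| ≤ B * |t - x| / x := by
  have hB₀ : 0 ≤ B := (abs_nonneg _).trans (hB x hx)
  have hs_nonneg : 0 ≤ s := ordConnected_Ici.uIcc_subset (mem_Ici.2 hx.le) (mem_Ici.2 ht) hs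
  rcases hs_nonneg.eq_or_lt with rfl | hs₀
  · obtain rfl : t = 0 := by
      rcases inf_le_iff.1 hs.1 with h | h <;> linarith
    simp only [sub_self, zero_mul, abs_zero]
    positivity
  · calc |(t - s) * g'' s| = |t - s| / s * |s * g'' s| := by
          rw [abs_mul, abs_mul, abs_of_pos hs₀]; field_simp
      _ ≤ |t - x| / x * B :=
          mul_le_mul (abs_sub_div_le_of_mem_uIcc hx ht hs hs₀) (hB s hs₀) (abs_nonneg _)
            (by positivity)
      _ = B * |t - x| / x := by ring

theorem abs_taylor_remainder_le_of_abs_mul_le {g g' g'' : ℝ → ℝ} {B x t : ℝ}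
    (hg' : ∀ x ∈ Ici (0 : ℝ), HasDerivWithinAt g (g' x) (Ici 0) x)
    (hg'' : ∀ x ∈ Ici (0 : ℝ), HasDerivWithinAt g' (g'' x) (Ici 0) x)
    (hB : ∀ s : ℝ, 0 < s → |s * g'' s| ≤ B) (hx : 0 < x) (ht : 0 ≤ t) :
    |g t - g x - g' x * (t - x)| ≤ B * (t - x) ^ 2 / x := by
  have hsub : uIcc x t ⊆ Ici 0 := ordConnected_Ici.uIcc_subset (mem_Ici.2 hx.le) (mem_Ici.2 ht)
  have hmvt := (convex_uIcc x t).norm_image_sub_le_of_norm_hasDerivWithin_le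
    (f := fun u => g t - g u - g' u * (t - u))
    (fun s hs => ((hg' s (hsub hs)).taylor_remainder_base (hg'' s (hsub hs))).mono hsub)
    (fun s hs => by rw [Real.norm_eq_abs, abs_neg]; exact abs_sub_mul_le_of_mem_uIcc hB hx ht hs)
    right_mem_uIcc left_mem_uIcc
  simp only [sub_self, mul_zero, sub_zero, Real.norm_eq_abs, abs_sub_comm x t] at hmvt
  calc |g t - g x - g' x * (t - x)| ≤ B * |t - x| / x * |t - x| := hmvt
    _ = B * (t - x) ^ 2 / x := by rw [mul_div_right_comm, mul_assoc, ← sq, sq_abs]; ring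

theorem totik_weighted_taylor_bound_general (g g' g'' : ℝ → ℝ) (B : ℝ)
    (hg' : ∀ x ∈ Ici (0 : ℝ), HasDerivWithinAt g (g' x) (Ici 0) x)
    (hg'' : ∀ x ∈ Ici (0 : ℝ), HasDerivWithinAt g' (g'' x) (Ici 0) x)
    (hB : ∀ s : ℝ, 0 < s → |s * g'' s| ≤ B) :
    ∀ x : ℝ, 0 < x → ∀ t : ℝ, 0 ≤ t →
      |g t - g x - g' x * (t - x)| ≤ 4 * ((t - x) ^ 2 / x) * B := by
  intro x hx t ht
  have hB₀ : 0 ≤ B := (abs_nonneg _).trans (hB x hx)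
  have hw : 0 ≤ (t - x) ^ 2 / x := by positivity
  calc |g t - g x - g' x * (t - x)| ≤ B * (t - x) ^ 2 / x :=
        abs_taylor_remainder_le_of_abs_mul_le hg' hg'' hB hx ht
    _ ≤ 4 * ((t - x) ^ 2 / x) * B := by rw [mul_div_assoc]; nlinarith

/-- Weighted Taylor remainder bound (Totik): if `g` is twice continuously differentiable on
`[0,∞)` with `|s·g''(s)| ≤ B` for all `s > 0`, then for all `x > 0` and `t ≥ 0`,
`|g(t) − g(x) − g'(x)(t−x)| ≤ 4 ((t−x)²/x) B`. -/
theorem totik_weighted_taylor_bound (g g' g'' : ℝ → ℝ) (B : ℝ)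
    (hg' : ∀ x ∈ Ici (0 : ℝ), HasDerivWithinAt g (g' x) (Ici 0) x)
    (hg'' : ∀ x ∈ Ici (0 : ℝ), HasDerivWithinAt g' (g'' x) (Ici 0) x)
    (hcont : ContinuousOn g'' (Ici 0))
    (hB : ∀ s : ℝ, 0 < s → |s * g'' s| ≤ B) :
    ∀ x : ℝ, 0 < x → ∀ t : ℝ, 0 ≤ t →
      |g t - g x - g' x * (t - x)| ≤ 4 * ((t - x) ^ 2 / x) * B :=
  totik_weighted_taylor_bound_general g g' g'' B hg' hg'' hB
end

section
/- Let X₁,...,X_N be i.i.d. from a distribution ν₀ on R^d with density bounded below by f_L > 0 on its support and satisfying ν₀(B(z,u) ∩ S₀) ≥ c₀·u^d for all z in a compact set and u ≤ R (with c₀ = f_L·a·V_d). Then for any fixed point x, integer p ≥ 1, and M ≤ N, the conditional p-th moment of the M-th nearest-neighbor distance satisfies E[‖X_{j_M(x)} − x‖^p] ≤ C_p·(M/N)^{p/d}, where X_{j_M(x)} is the M-th nearest neighbor of x among X₁,...,X_N and C_p depends only on p, d, c₀, R. -/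
/-!
For `0 < t ≤ R`, the event that the `M`-th nearest neighbour of `x` is farther than `t` says that
fewer than `M` of the `N` i.i.d. points fall in `closedBall x t`, a set of `ν₀`-mass at least
`c₀ t^d`. The Chernoff bound for this binomial count, taken at `θ = -1`, gives the tail bound
`exp (M - (1 - e⁻¹) c₀ N t^d)`, while beyond `R` the tail vanishes. As `M ≥ 1`, the tail is then
at most `exp (1 - b t^d)` with `b = (1 - e⁻¹) c₀ N / M`, and the layer-cake formula
`E[D^p] = p ∫ t^(p-1) P(t < D) dt` turns this into a Gamma integral:
`E[D^p] ≤ e Γ(p/d + 1) b^(-p/d)`.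
-/

open MeasureTheory ProbabilityTheory Metric

/-- The `M`-th order statistic (the `M`-th smallest value) of a tuple of reals; applied to the
distances `dist (X i ω) x`, it is the distance from `x` to its `M`-th nearest neighbor. -/
noncomputable def orderStat {N : ℕ} (M : ℕ) (f : Fin N → ℝ) : ℝ :=
  sInf {t : ℝ | M ≤ (Finset.univ.filter (fun i => f i ≤ t)).card}

open Finset Real Set

lemma isClosed_setOf_le_card_filter_le {ι : Type*} [Fintype ι] (f : ι → ℝ) (M : ℕ) :
    IsClosed {t : ℝ | M ≤ #{i | f i ≤ t}} := by
  have : {t : ℝ | M ≤ #{i | f i ≤ t}} = ⋃ s ∈ powersetCard M univ, ⋂ i ∈ s, Set.Ici (f i) := by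
    ext t
    simp only [Set.mem_ofPred_eq, Set.mem_iUnion, Set.mem_iInter, Set.mem_Ici, mem_powersetCard,
      Finset.subset_univ, true_and, exists_prop]
    constructor
    · intro h
      obtain ⟨s, hs, hcard⟩ := exists_subset_card_eq h
      exact ⟨s, hcard, fun i hi => (mem_filter.mp (hs hi)).2⟩
    · rintro ⟨s, rfl, hs⟩
      exact card_le_card fun i hi => mem_filter.mpr ⟨mem_univ i, hs i hi⟩
  rw [this]
  exact isClosed_biUnion_finset fun s _ => isClosed_biInter fun i _ => isClosed_Ici

lemma orderStat_le_iff {N M : ℕ} (hM : 1 ≤ M) (hMN : M ≤ N) (f : Fin N → ℝ) (t : ℝ) :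
    orderStat M f ≤ t ↔ M ≤ #{i | f i ≤ t} := by
  set A := {t : ℝ | M ≤ #{i | f i ≤ t}}
  have hA_mono : ∀ ⦃s t⦄, s ≤ t → s ∈ A → t ∈ A := fun s t hst hs =>
    hs.trans (card_le_card fun i hi => mem_filter.mpr ⟨mem_univ i, (mem_filter.mp hi).2.trans hst⟩)
  obtain ⟨b, hb⟩ := (Set.finite_range f).bddAbove
  obtain ⟨a, ha⟩ := (Set.finite_range f).bddBelow
  have hA_nonempty : A.Nonempty := ⟨b, by
    simpa [A, filter_true_of_mem fun i _ => hb (Set.mem_range_self i)] using hMN⟩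
  have hA_bdd : BddBelow A := ⟨a, fun s hs => by
    obtain ⟨i, hi⟩ := card_pos.mp (hM.trans hs)
    exact (ha (Set.mem_range_self i)).trans (mem_filter.mp hi).2⟩
  exact ⟨fun h => hA_mono h ((isClosed_setOf_le_card_filter_le f M).csInf_mem hA_nonempty hA_bdd),
    fun h => csInf_le hA_bdd h⟩

lemma orderStat_nonneg {N M : ℕ} (hM : 1 ≤ M) {f : Fin N → ℝ} (hf : ∀ i, 0 ≤ f i) :
    0 ≤ orderStat M f :=
  Real.sInf_nonneg fun t ht => by
    obtain ⟨i, hi⟩ := card_pos.mp (hM.trans ht)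
    exact (hf i).trans (mem_filter.mp hi).2

lemma measurable_orderStat {Ω : Type*} [MeasurableSpace Ω] {N M : ℕ} (hM : 1 ≤ M) (hMN : M ≤ N)
    {f : Fin N → Ω → ℝ} (hf : ∀ i, Measurable (f i)) :
    Measurable fun ω => orderStat M fun i => f i ω := by
  refine measurable_of_Iic fun t => ?_
  have : (fun ω => orderStat M fun i => f i ω) ⁻¹' Set.Iic t =
      (fun ω => ∑ i, if f i ω ≤ t then 1 else 0) ⁻¹' Set.Ici M := by
    ext ω
    simp only [Set.mem_preimage, Set.mem_Iic, Set.mem_Ici, orderStat_le_iff hM hMN, card_filter]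
  rw [this]
  exact Finset.measurable_sum _ (fun i _ => Measurable.ite
    (measurableSet_le (hf i) measurable_const) measurable_const measurable_const) measurableSet_Ici

lemma mgf_indicator_one {α : Type*} [MeasurableSpace α] {μ : Measure α} [IsProbabilityMeasure μ]
    {E : Set α} (hE : MeasurableSet E) (t : ℝ) :
    mgf (E.indicator 1) μ t = 1 + (exp t - 1) * μ.real E := by
  have h : (fun x => exp (t * E.indicator 1 x)) =
      fun x => 1 + E.indicator (fun _ => exp t - 1) x := by
    funext x
    by_cases hx : x ∈ E <;> simp [hx]
  rw [mgf, h, integral_add (integrable_const 1) ((integrable_const _).indicator hE),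
    integral_indicator_const _ hE]
  simp [mul_comm]

open Classical in
lemma measure_card_lt_le_exp {Ω α ι : Type*} [MeasurableSpace Ω] [MeasurableSpace α] [Fintype ι]
    {P : Measure Ω} [IsProbabilityMeasure P] {ν : Measure α} [IsProbabilityMeasure ν]
    {X : ι → Ω → α} (hX : ∀ i, Measurable (X i)) (hind : iIndepFun X P)
    (hmap : ∀ i, P.map (X i) = ν) {B : Set α} (hB : MeasurableSet B) (M : ℕ) :
    P.real {ω | #{i | X i ω ∈ B} < M} ≤
      exp (M - (1 - exp (-1)) * Fintype.card ι * ν.real B) := by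
  set Z : ι → Ω → ℝ := fun i => B.indicator 1 ∘ X i
  have hZ : ∀ i, Measurable (Z i) := fun i => (measurable_one.indicator hB).comp (hX i)
  have hcount : ∀ ω, (∑ i, Z i) ω = #{i | X i ω ∈ B} := by
    intro ω
    simp [Z, Finset.sum_apply, Set.indicator_apply, Finset.sum_boole]
  have hmgf : mgf (∑ i, Z i) P (-1) = (1 - (1 - exp (-1)) * ν.real B) ^ Fintype.card ι := by
    rw [(hind.comp _ fun _ => measurable_one.indicator hB).mgf_sum hZ]
    refine (prod_congr rfl fun i _ => ?_).trans (prod_const _)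
    rw [← mgf_map (hX i).aemeasurable (by fun_prop (disch := exact hB)), hmap i,
      mgf_indicator_one hB]
    ring
  have hint : Integrable (fun ω => exp (-1 * (∑ i, Z i) ω)) P := by
    refine Integrable.of_bound (by fun_prop) 1 (ae_of_all _ fun ω => ?_)
    rw [norm_of_nonneg (exp_nonneg _), hcount, exp_le_one_iff]
    simp
  have hevent : {ω | #{i | X i ω ∈ B} < M} ⊆ {ω | (∑ i, Z i) ω ≤ M - 1} := by
    intro ω hω
    have : (#{i | X i ω ∈ B} : ℝ) + 1 ≤ M := by exact_mod_cast hω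
    simp only [Set.mem_ofPred_eq, hcount]
    linarith
  calc P.real {ω | #{i | X i ω ∈ B} < M}
      ≤ P.real {ω | (∑ i, Z i) ω ≤ M - 1} := measureReal_mono hevent
    _ ≤ exp (-(-1) * (M - 1)) * mgf (∑ i, Z i) P (-1) :=
        measure_le_le_exp_mul_mgf _ (by norm_num) hint
    _ ≤ exp (M - 1) * exp (-((1 - exp (-1)) * ν.real B)) ^ Fintype.card ι := by
        rw [hmgf, neg_neg, one_mul]
        gcongr
        · nlinarith [measureReal_le_one (μ := ν) (s := B), measureReal_nonneg (μ := ν) (s := B),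
            exp_pos (-1)]
        · linarith [add_one_le_exp (-((1 - exp (-1)) * ν.real B))]
    _ ≤ exp (M - (1 - exp (-1)) * Fintype.card ι * ν.real B) := by
        rw [← exp_nat_mul, ← exp_add]
        gcongr
        linarith

lemma le_exp_one_sub_of_le_exp_mul {a M x : ℝ} (hM : 1 ≤ M) (ha : a ≤ 1)
    (h : a ≤ exp (M * (1 - x))) : a ≤ exp (1 - x) := by
  rcases le_total x 1 with hx | hx
  · exact ha.trans (one_le_exp (by linarith))
  · exact h.trans (exp_le_exp.mpr (by nlinarith))

lemma integral_rpow_le_of_measureReal_lt_le_exp {Ω : Type*} [MeasurableSpace Ω] {P : Measure Ω}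
    [IsFiniteMeasure P] {Y : Ω → ℝ} (hY0 : 0 ≤ᵐ[P] Y) (hY : AEMeasurable Y P) {p d b : ℝ}
    (hp : 0 < p) (hd : 0 < d) (hb : 0 < b)
    (htail : ∀ t > 0, P.real {ω | t < Y ω} ≤ exp (1 - b * t ^ d)) :
    ∫ ω, Y ω ^ p ∂P ≤ exp 1 * Gamma (p / d + 1) * b ^ (-(p / d)) := by
  set g : ℝ → ℝ := fun t => t ^ (p - 1) * exp (-b * t ^ d)
  have hg_int : IntegrableOn g (Ioi 0) :=
    integrableOn_rpow_mul_exp_neg_mul_rpow (by linarith) hd hb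
  have hg_integral : ∫ t in Ioi 0, g t = b ^ (-(p / d)) * p⁻¹ * Gamma (p / d + 1) := by
    rw [integral_rpow_mul_exp_neg_mul_rpow hd (by linarith) hb, sub_add_cancel,
      Gamma_add_one (by positivity), neg_div]
    field_simp
  have hpoint : ∀ t ∈ Ioi (0 : ℝ), P {ω | t < Y ω} * ENNReal.ofReal (t ^ (p - 1)) ≤
      ENNReal.ofReal (exp 1 * g t) := by
    intro t ht
    have h1 : P {ω | t < Y ω} ≤ ENNReal.ofReal (exp (1 - b * t ^ d)) :=
      (ENNReal.le_ofReal_iff_toReal_le (measure_ne_top _ _) (exp_nonneg _)).mpr (htail t ht)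
    calc P {ω | t < Y ω} * ENNReal.ofReal (t ^ (p - 1))
        ≤ ENNReal.ofReal (exp (1 - b * t ^ d)) * ENNReal.ofReal (t ^ (p - 1)) := by gcongr
      _ = ENNReal.ofReal (exp 1 * g t) := by
        rw [← ENNReal.ofReal_mul (exp_nonneg _), sub_eq_add_neg, exp_add]
        simp only [g]
        ring_nf
  have hlint : ∫⁻ ω, ENNReal.ofReal (Y ω ^ p) ∂P ≤
      ENNReal.ofReal (exp 1 * Gamma (p / d + 1) * b ^ (-(p / d))) := by
    rw [lintegral_rpow_eq_lintegral_meas_lt_mul P hY0 hY hp]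
    calc ENNReal.ofReal p * ∫⁻ t in Ioi 0, P {ω | t < Y ω} * ENNReal.ofReal (t ^ (p - 1))
        ≤ ENNReal.ofReal p * ∫⁻ t in Ioi 0, ENNReal.ofReal (exp 1 * g t) := by
          gcongr 1
          exact setLIntegral_mono' measurableSet_Ioi hpoint
      _ = ENNReal.ofReal (exp 1 * Gamma (p / d + 1) * b ^ (-(p / d))) := by
          rw [← ofReal_integral_eq_lintegral_ofReal (hg_int.const_mul _),
            ← ENNReal.ofReal_mul hp.le, integral_const_mul, hg_integral]
          · congr 1
            field_simp
          · exact ae_restrict_of_forall_mem measurableSet_Ioi fun t (ht : 0 < t) => by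
              simp only [g]; positivity
  rw [integral_eq_lintegral_of_nonneg_ae (hY0.mono fun ω h => rpow_nonneg h p)
    (hY.pow_const p).aestronglyMeasurable]
  exact ENNReal.toReal_le_of_le_ofReal (by positivity) hlint

lemma measureReal_lt_orderStat_dist_le_exp {Ω E : Type*} [MeasurableSpace Ω]
    [PseudoMetricSpace E] [MeasurableSpace E] [OpensMeasurableSpace E]
    {P : Measure Ω} [IsProbabilityMeasure P] {ν : Measure E} [IsProbabilityMeasure ν]
    {N M : ℕ} (hM : 1 ≤ M) (hMN : M ≤ N) {X : Fin N → Ω → E} (hX : ∀ i, Measurable (X i))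
    (hind : iIndepFun X P) (hmap : ∀ i, P.map (X i) = ν) {x : E} {t q : ℝ}
    (hq : ENNReal.ofReal q ≤ ν (closedBall x t)) :
    P.real {ω | t < orderStat M fun i => dist (X i ω) x} ≤
      exp (M - (1 - exp (-1)) * N * q) := by
  classical
  have hevent : {ω | t < orderStat M fun i => dist (X i ω) x} =
      {ω | #{i | X i ω ∈ closedBall x t} < M} := by
    ext ω
    simp only [Set.mem_ofPred_eq, ← not_le, orderStat_le_iff hM hMN, mem_closedBall]
  have hq' : q ≤ ν.real (closedBall x t) :=
    (ENNReal.ofReal_le_iff_le_toReal (measure_ne_top _ _)).mp hq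
  rw [hevent]
  refine (measure_card_lt_le_exp hX hind hmap measurableSet_closedBall M).trans ?_
  rw [Fintype.card_fin]
  gcongr
  exact mul_nonneg (sub_nonneg.mpr (exp_le_one_iff.mpr (by norm_num))) N.cast_nonneg

lemma ae_orderStat_dist_le {Ω E : Type*} [MeasurableSpace Ω] [PseudoMetricSpace E]
    [MeasurableSpace E] [OpensMeasurableSpace E] {P : Measure Ω} {ν : Measure E}
    {N M : ℕ} (hM : 1 ≤ M) (hMN : M ≤ N) {X : Fin N → Ω → E} (hX : ∀ i, Measurable (X i))
    (hmap : ∀ i, P.map (X i) = ν) {x : E} {R : ℝ} (hν : ∀ᵐ y ∂ν, y ∈ closedBall x R) :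
    ∀ᵐ ω ∂P, orderStat M (fun i => dist (X i ω) x) ≤ R := by
  have hX_mem : ∀ i, ∀ᵐ ω ∂P, X i ω ∈ closedBall x R := fun i =>
    (ae_map_iff (hX i).aemeasurable measurableSet_closedBall).mp (hmap i ▸ hν)
  filter_upwards [ae_all_iff.mpr hX_mem] with ω hω
  refine (orderStat_le_iff hM hMN _ R).mpr ?_
  rwa [filter_true_of_mem fun i _ => mem_closedBall.mp (hω i), card_univ, Fintype.card_fin]

lemma measureReal_lt_orderStat_dist_le_exp_one_sub {Ω E : Type*} [MeasurableSpace Ω]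
    [PseudoMetricSpace E] [MeasurableSpace E] [OpensMeasurableSpace E]
    {P : Measure Ω} [IsProbabilityMeasure P] {ν : Measure E} [IsProbabilityMeasure ν]
    {N M : ℕ} (hM : 1 ≤ M) (hMN : M ≤ N) {X : Fin N → Ω → E} (hX : ∀ i, Measurable (X i))
    (hind : iIndepFun X P) (hmap : ∀ i, P.map (X i) = ν) {x : E} {d : ℕ} {c₀ R : ℝ}
    (hν : ∀ᵐ y ∂ν, y ∈ closedBall x R)
    (hball : ∀ t, 0 < t → t ≤ R → ENNReal.ofReal (c₀ * t ^ d) ≤ ν (closedBall x t))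
    {t : ℝ} (ht : 0 < t) :
    P.real {ω | t < orderStat M fun i => dist (X i ω) x} ≤
      exp (1 - (1 - exp (-1)) * c₀ * N / M * t ^ (d : ℝ)) := by
  rcases le_or_gt t R with htR | htR
  · refine le_exp_one_sub_of_le_exp_mul (Nat.one_le_cast.mpr hM) measureReal_le_one ?_
    convert measureReal_lt_orderStat_dist_le_exp hM hMN hX hind hmap (hball t ht htR) using 2
    have hM₀ : (M : ℝ) ≠ 0 := by positivity
    rw [rpow_natCast]
    field_simp
  · have hnull : P {ω | t < orderStat M fun i => dist (X i ω) x} = 0 :=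
      measure_mono_null (fun ω hω => not_le.mpr (htR.trans hω))
        (ae_iff.mp (ae_orderStat_dist_le hM hMN hX hmap hν))
    rw [measureReal_def, hnull, ENNReal.toReal_zero]
    positivity

theorem nearest_neighbor_distance_moment_bound_general
    (d p : ℕ) (hd : 0 < d) (hp : 0 < p) (c₀ R : ℝ) (hc₀ : 0 < c₀) :
    ∃ C : ℝ, 0 < C ∧
      ∀ (Ω : Type) (_ : MeasurableSpace Ω) (P : Measure Ω), IsProbabilityMeasure P →
      ∀ (N M : ℕ), 1 ≤ M → M ≤ N →
      ∀ (ν₀ : Measure (EuclideanSpace ℝ (Fin d))), IsProbabilityMeasure ν₀ →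
      ∀ (S : Set (EuclideanSpace ℝ (Fin d))) (x : EuclideanSpace ℝ (Fin d)),
        x ∈ S → ν₀ S = 1 → S ⊆ closedBall x R →
        (∀ z ∈ S, ∀ u : ℝ, 0 ≤ u → u ≤ R →
          ENNReal.ofReal (c₀ * u ^ d) ≤ ν₀ (closedBall z u ∩ S)) →
      ∀ (X : Fin N → Ω → EuclideanSpace ℝ (Fin d)), (∀ i, Measurable (X i)) →
        iIndepFun X P →
        (∀ i, Measure.map (X i) P = ν₀) →
        (∫ ω, (orderStat M (fun i => dist (X i ω) x)) ^ p ∂P)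
          ≤ C * ((M : ℝ) / N) ^ ((p : ℝ) / d) := by
  have hβ : 0 < 1 - exp (-1) := sub_pos.mpr (exp_lt_one_iff.mpr (by norm_num))
  refine ⟨exp 1 * Gamma (p / d + 1) * ((1 - exp (-1)) * c₀) ^ (-(p / d : ℝ)), by positivity, ?_⟩
  intro Ω _ P _ N M hM hMN ν₀ _ S x hxS hS1 hSball hcorner X hX hind hmap
  have hM₀ : (0 : ℝ) < M := by exact_mod_cast hM
  have hN₀ : (0 : ℝ) < N := by exact_mod_cast hM.trans hMN
  have hν : ∀ᵐ y ∂ν₀, y ∈ closedBall x R :=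
    (ae_iff_measure_eq measurableSet_closedBall.nullMeasurableSet).mpr <| by
      rw [measure_univ]
      exact le_antisymm prob_le_one (hS1 ▸ measure_mono hSball)
  have hball (t : ℝ) (ht : 0 < t) (htR : t ≤ R) :
      ENNReal.ofReal (c₀ * t ^ d) ≤ ν₀ (closedBall x t) :=
    (hcorner x hxS t ht.le htR).trans (measure_mono inter_subset_left)
  calc ∫ ω, (orderStat M fun i => dist (X i ω) x) ^ p ∂P
      = ∫ ω, (orderStat M fun i => dist (X i ω) x) ^ (p : ℝ) ∂P := by simp_rw [rpow_natCast]
    _ ≤ exp 1 * Gamma (p / d + 1) * ((1 - exp (-1)) * c₀ * N / M) ^ (-(p / d : ℝ)) :=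
      integral_rpow_le_of_measureReal_lt_le_exp
        (ae_of_all _ fun ω => orderStat_nonneg hM fun i => dist_nonneg)
        (measurable_orderStat hM hMN fun i => (hX i).dist measurable_const).aemeasurable
        (by positivity) (by positivity) (by positivity)
        fun t ht => measureReal_lt_orderStat_dist_le_exp_one_sub hM hMN hX hind hmap hν hball ht
    _ = _ := by
      rw [mul_div_assoc, ← inv_div (M : ℝ), mul_rpow (by positivity) (by positivity),
        inv_rpow (by positivity), ← rpow_neg (by positivity), neg_neg]
      ring

/-- Moment bound for nearest-neighbor distances: there is a constant `C` depending only on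
`p`, `d`, `c₀`, `R` such that, whenever `X_1,…,X_N` are i.i.d. from a distribution `ν₀`
supported in a set `S` of diameter at most `R` around `x` and satisfying
`ν₀(B(z,u) ∩ S) ≥ c₀ u^d` for `z ∈ S` and `0 ≤ u ≤ R`, the `p`-th moment of the distance
from `x ∈ S` to its `M`-th nearest neighbor is at most `C (M/N)^{p/d}`. -/
theorem nearest_neighbor_distance_moment_bound
    (d p : ℕ) (hd : 0 < d) (hp : 0 < p) (c₀ R : ℝ) (hc₀ : 0 < c₀) (hR : 0 < R) :
    ∃ C : ℝ, 0 < C ∧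
      ∀ (Ω : Type) (_ : MeasurableSpace Ω) (P : Measure Ω), IsProbabilityMeasure P →
      ∀ (N M : ℕ), 1 ≤ M → M ≤ N →
      ∀ (ν₀ : Measure (EuclideanSpace ℝ (Fin d))), IsProbabilityMeasure ν₀ →
      ∀ (S : Set (EuclideanSpace ℝ (Fin d))) (x : EuclideanSpace ℝ (Fin d)),
        x ∈ S → ν₀ S = 1 → S ⊆ closedBall x R →
        (∀ z ∈ S, ∀ u : ℝ, 0 ≤ u → u ≤ R →
          ENNReal.ofReal (c₀ * u ^ d) ≤ ν₀ (closedBall z u ∩ S)) →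
      ∀ (X : Fin N → Ω → EuclideanSpace ℝ (Fin d)), (∀ i, Measurable (X i)) →
        iIndepFun X P →
        (∀ i, Measure.map (X i) P = ν₀) →
        (∫ ω, (orderStat M (fun i => dist (X i ω) x)) ^ p ∂P)
          ≤ C * ((M : ℝ) / N) ^ ((p : ℝ) / d) :=
  nearest_neighbor_distance_moment_bound_general d p hd hp c₀ R hc₀
end
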